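/- Let p be an odd prime, f even with f ∣ p−1, and g a primitive root modulo p² with Fermat quotient q_p(g) = 1. Then for every l with 0 ≤ l < p, D_l = ⋃_{i=0}^{f−1} D_{l+ip}^{(p²,f)}. -/
import Mathlib


open Polynomial Finset

/-- The Fermat quotient `q_p(u) ∈ {0,…,p-1}`, with `q_p(u) ≡ (u^(p-1)-1)/p (mod p)`
for `gcd(u,p)=1`, and `q_p(u)=0` if `p ∣ u`. -/
def qp (p u : ℕ) : ℕ := if u % p = 0 then 0 else (u ^ (p - 1) - 1) / p % p

/-- The generalized cyclotomic class `D_l^{(p^j, f)} = {g^(l + k·f·p^(j-1)) mod p^j : 0 ≤ k < e}`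
where `e = (p-1)/f`. -/
def Dcl (p f g j l : ℕ) : Finset ℕ :=
  (Finset.range ((p - 1) / f)).image (fun k => g ^ (l + k * f * p ^ (j - 1)) % p ^ j)

/-- The class `D_l = {u : 0 ≤ u < p², gcd(u,p)=1, q_p(u)=l}` defined via Fermat quotients. -/
def Dq (p l : ℕ) : Finset ℕ :=
  (Finset.range (p ^ 2)).filter (fun u => u % p ≠ 0 ∧ qp p u = l)

/-- `C_0 = ⋃_{i=f/2}^{f-1} p·D_{(i+b mod f)}^{(p,f)} ∪ ⋃_{i=pf/2}^{pf-1} D_{(i+b mod pf)}^{(p²,f)}`. -/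
def C0 (p f g b : ℕ) : Finset ℕ :=
  ((Finset.Ico (f / 2) f).biUnion
      (fun i => (Dcl p f g 1 ((i + b) % f)).image (fun v => p * v))) ∪
  ((Finset.Ico (p * f / 2) (p * f)).biUnion (fun i => Dcl p f g 2 ((i + b) % (p * f))))

/-- `C_1 = ⋃_{i=0}^{f/2-1} p·D_{(i+b mod f)}^{(p,f)} ∪ ⋃_{i=0}^{pf/2-1} D_{(i+b mod pf)}^{(p²,f)} ∪ {0}`. -/
def C1 (p f g b : ℕ) : Finset ℕ :=
  ((Finset.range (f / 2)).biUnion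
      (fun i => (Dcl p f g 1 ((i + b) % f)).image (fun v => p * v))) ∪
  ((Finset.range (p * f / 2)).biUnion (fun i => Dcl p f g 2 ((i + b) % (p * f)))) ∪ {0}

/-- The binary sequence `(s_n)` of period `p²`: `s_n = 1` iff `n mod p² ∈ C_1`. -/
def seqS (p f g b : ℕ) (n : ℕ) : ZMod 2 :=
  if n % p ^ 2 ∈ C1 p f g b then 1 else 0

/-- Generating polynomial `S(X) = Σ_{n<T} s_n X^n ∈ F₂[X]`. -/
noncomputable def genPoly (T : ℕ) (s : ℕ → ZMod 2) : Polynomial (ZMod 2) :=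
  ∑ n ∈ Finset.range T, Polynomial.C (s n) * Polynomial.X ^ n

/-- Linear complexity over `F₂` of a `T`-periodic sequence:
`LC = T - deg gcd(X^T - 1, S(X))`. -/
noncomputable def LC (T : ℕ) (s : ℕ → ZMod 2) : ℕ :=
  T - (EuclideanDomain.gcd (Polynomial.X ^ T - 1) (genPoly T s)).natDegree

/-- The `k`-error linear complexity over `F₂`: the minimum linear complexity obtainable
by changing at most `k` terms of the sequence per period. -/
noncomputable def errLC (T k : ℕ) (s : ℕ → ZMod 2) : ℕ :=
  sInf { L | ∃ t : ℕ → ZMod 2,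
    ((Finset.range T).filter (fun n => t n ≠ s n)).card ≤ k ∧ L = LC T t }

/-- `g` is a primitive root modulo `m`: its multiplicative order in `ZMod m` is `φ(m)`. -/
def isPrimRoot (g m : ℕ) : Prop := orderOf (g : ZMod m) = Nat.totient m

/-- `Q_b = ⋃_{i=0}^{f/2-1} D_{(i+b mod f)}^{(p,f)} ⊆ {1,…,p-1}`. -/
def Qb (p f g b : ℕ) : Finset ℕ :=
  (Finset.range (f / 2)).biUnion (fun i => Dcl p f g 1 ((i + b) % f))

/-- `N_b = {1,…,p-1} \ Q_b`. -/
def Nb (p f g b : ℕ) : Finset ℕ := (Finset.Ico 1 p) \ Qb p f g b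

/-- `V_v = {v, v+p, v+2p, …, v+(p-1)p}`. -/
def Vset (p v : ℕ) : Finset ℕ := (Finset.range p).image (fun i => v + i * p)


section AuxStmt11

lemma pp_zero (p : ℕ) : ((p : ZMod (p^2)) * p) = 0 := by
  rw [← Nat.cast_mul, ← pow_two, ZMod.natCast_self]

lemma mul_p_reduce (p s : ℕ) :
    ((s : ZMod (p^2))) * p = ((s % p : ℕ) : ZMod (p^2)) * p := by
  have h := pp_zero p
  conv_lhs => rw [← Nat.div_add_mod s p]
  push_cast
  linear_combination ((s / p : ℕ) : ZMod (p^2)) * h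

lemma one_add_p_pow (p t : ℕ) :
    ((1 : ZMod (p^2)) + p) ^ t = 1 + (t : ZMod (p^2)) * p := by
  have h := pp_zero p
  induction t with
  | zero => simp
  | succ n ih =>
    have hs : ((1 : ZMod (p^2)) + p) ^ (n+1) = ((1 : ZMod (p^2)) + p)^n * (1+p) := pow_succ _ _
    rw [hs, ih]
    push_cast
    linear_combination ((n : ZMod (p^2))) * h

lemma add_mul_p_inj {p : ℕ} (hp : p.Prime) {a b : ℕ} (ha : a < p) (hb : b < p)
    (h : (1 : ZMod (p^2)) + (a : ZMod (p^2)) * p = 1 + (b : ZMod (p^2)) * p) : a = b := by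
  haveI : NeZero (p^2) := ⟨pow_ne_zero 2 hp.ne_zero⟩
  have h2 : ((a * p : ℕ) : ZMod (p^2)) = ((b * p : ℕ) : ZMod (p^2)) := by
    push_cast
    exact add_left_cancel h
  have hv := congrArg ZMod.val h2
  rw [ZMod.val_cast_of_lt, ZMod.val_cast_of_lt] at hv
  · exact Nat.eq_of_mul_eq_mul_right hp.pos hv
  · rw [pow_two]; exact Nat.mul_lt_mul_right hp.pos |>.mpr hb
  · rw [pow_two]; exact Nat.mul_lt_mul_right hp.pos |>.mpr ha

lemma qp_lt {p : ℕ} (hp0 : 0 < p) (u : ℕ) : qp p u < p := by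
  unfold qp
  split
  · exact hp0
  · exact Nat.mod_lt _ hp0

lemma qp_spec {p : ℕ} (hp : p.Prime) (u : ℕ) (hu : u % p ≠ 0) :
    ((u : ZMod (p^2))) ^ (p - 1) = 1 + ((qp p u : ℕ) : ZMod (p^2)) * p := by
  haveI := Fact.mk hp
  haveI : Fact (1 < p) := ⟨hp.one_lt⟩
  have hp0 : 0 < p := hp.pos
  have hdvd : ¬ p ∣ u := fun h => hu (Nat.mod_eq_zero_of_dvd h)
  have hu0 : (u : ZMod p) ≠ 0 := by
    rwa [Ne, ZMod.natCast_eq_zero_iff]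
  have hferm : ((u ^ (p - 1) : ℕ) : ZMod p) = 1 := by
    push_cast; exact ZMod.pow_card_sub_one_eq_one hu0
  have hamod : u ^ (p - 1) % p = 1 := by
    have := ZMod.val_natCast (n := p) (u ^ (p - 1))
    rw [hferm, ZMod.val_one] at this
    omega
  have hdm := Nat.div_add_mod (u ^ (p - 1)) p
  have hqp : qp p u = (u ^ (p - 1) / p) % p := by
    simp only [qp, if_neg hu]
    have h1 : u ^ (p - 1) - 1 = p * (u ^ (p - 1) / p) := by omega
    rw [h1, Nat.mul_div_cancel_left _ hp0]
  rw [hqp]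
  have hcast : ((u : ZMod (p^2))) ^ (p - 1)
      = ((p * (u ^ (p - 1) / p) + 1 : ℕ) : ZMod (p^2)) := by
    have : p * (u ^ (p - 1) / p) + 1 = u ^ (p - 1) := by omega
    rw [this]; push_cast; ring
  rw [hcast]
  push_cast
  rw [← mul_p_reduce p (u ^ (p - 1) / p)]
  ring

lemma gen_unit {p g : ℕ} (hp : p.Prime)
    (hg : orderOf ((g : ZMod (p^2))) = Nat.totient (p^2)) :
    IsUnit ((g : ZMod (p^2))) := by
  have htotpos : 0 < Nat.totient (p^2) :=
    Nat.totient_pos.mpr (by have := hp.pos; positivity)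
  refine IsUnit.of_pow_eq_one (n := Nat.totient (p^2)) ?_ htotpos.ne'
  rw [← hg]; exact pow_orderOf_eq_one _

lemma unit_mod_ne {p u : ℕ} (hp : p.Prime) (h : IsUnit ((u : ℕ) : ZMod (p^2))) :
    u % p ≠ 0 := by
  haveI : NeZero (p^2) := ⟨pow_ne_zero 2 hp.ne_zero⟩
  have hc : Nat.Coprime u (p^2) := (ZMod.isUnit_iff_coprime u (p^2)).mp h
  intro h0
  have hd : p ∣ u := Nat.dvd_of_mod_eq_zero h0
  have hg : p ∣ Nat.gcd u (p^2) := Nat.dvd_gcd hd (dvd_pow_self p two_ne_zero)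
  rw [hc] at hg
  have := Nat.le_of_dvd one_pos hg
  have := hp.two_le
  omega

lemma gen_surj {p g : ℕ} (hp : p.Prime)
    (hg : orderOf ((g : ZMod (p^2))) = Nat.totient (p^2)) :
    ∀ x : (ZMod (p^2))ˣ, ∃ t : ℕ, t < p * (p - 1) ∧ ((g : ZMod (p^2)))^t = ↑x := by
  haveI := Fact.mk hp
  haveI : NeZero (p^2) := ⟨pow_ne_zero 2 hp.ne_zero⟩
  have htot : Nat.totient (p^2) = p * (p - 1) := by
    rw [Nat.totient_prime_pow hp (by norm_num)]
    norm_num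
  have hord : orderOf ((g : ZMod (p^2))) = p * (p - 1) := by rw [hg, htot]
  have hpos : 0 < p * (p - 1) := by
    have := hp.two_le; exact Nat.mul_pos hp.pos (by omega)
  obtain ⟨gu, hgu⟩ := gen_unit hp hg
  have hordu : orderOf gu = p * (p - 1) := by
    rw [← orderOf_units, hgu, hord]
  have htop : Subgroup.zpowers gu = ⊤ := by
    apply Subgroup.eq_top_of_card_eq
    rw [Nat.card_zpowers, hordu, Nat.card_eq_fintype_card, ZMod.card_units_eq_totient, htot]
  intro x
  have hx : x ∈ Subgroup.zpowers gu := htop ▸ Subgroup.mem_top x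
  rw [← mem_powers_iff_mem_zpowers] at hx
  obtain ⟨n, hn⟩ := hx
  refine ⟨n % (p * (p - 1)), Nat.mod_lt _ hpos, ?_⟩
  have h1 : gu ^ (n % (p * (p - 1))) = x := by
    rw [← hordu, pow_mod_orderOf]; exact hn
  rw [← hgu, ← Units.val_pow_eq_pow_val, h1]

lemma pow_fermat {p g : ℕ} (hp : p.Prime) (hgmod : g % p ≠ 0) (hqg : qp p g = 1)
    (t : ℕ) :
    (((g : ZMod (p^2)))^t)^(p-1) = 1 + ((t % p : ℕ) : ZMod (p^2)) * p := by
  have h1 : ((g : ZMod (p^2)))^(p-1) = 1 + (p : ZMod (p^2)) := by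
    rw [qp_spec hp g hgmod, hqg]; push_cast; ring
  calc (((g : ZMod (p^2)))^t)^(p-1) = (((g : ZMod (p^2)))^(p-1))^t := by
        rw [← pow_mul, ← pow_mul, mul_comm]
    _ = ((1 : ZMod (p^2)) + p)^t := by rw [h1]
    _ = 1 + (t : ZMod (p^2)) * p := one_add_p_pow p t
    _ = 1 + ((t % p : ℕ) : ZMod (p^2)) * p := by rw [mul_p_reduce]

end AuxStmt11

/-- `D_l = ⋃_{i=0}^{f-1} D_{l+ip}^{(p²,f)}` for all `0 ≤ l < p`. -/
theorem stmt11 (p f g : ℕ) (hp : p.Prime) (hodd : Odd p)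
    (hf : Even f) (hfpos : 0 < f) (hfd : f ∣ p - 1)
    (hg : isPrimRoot g (p ^ 2)) (hqg : qp p g = 1) :
    ∀ l : ℕ, l < p →
      Dq p l = (Finset.range f).biUnion (fun i => Dcl p f g 2 (l + i * p)) := by
  intro l hl
  haveI := Fact.mk hp
  haveI : NeZero (p^2) := ⟨pow_ne_zero 2 hp.ne_zero⟩
  have hp0 : 0 < p := hp.pos
  have hsq : 0 < p ^ 2 := by positivity
  have hgunit : IsUnit ((g : ZMod (p^2))) := gen_unit hp hg
  have hgmod : g % p ≠ 0 := unit_mod_ne hp hgunit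
  have hqlt : ∀ u, qp p u < p := qp_lt hp0
  ext u
  simp only [Dq, Dcl, Finset.mem_filter, Finset.mem_range, Finset.mem_biUnion,
    Finset.mem_image]
  constructor
  · rintro ⟨hu_lt, hup, hq⟩
    have hpu : ¬ p ∣ u := fun h => hup (Nat.mod_eq_zero_of_dvd h)
    have hco1 : Nat.Coprime u p := Nat.Coprime.symm ((Nat.Prime.coprime_iff_not_dvd hp).mpr hpu)
    have hco2 : Nat.Coprime u (p^2) := hco1.pow_right 2
    have hu_unit : IsUnit ((u : ℕ) : ZMod (p^2)) := (ZMod.isUnit_iff_coprime u (p^2)).mpr hco2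
    obtain ⟨xu, hxu⟩ := hu_unit
    obtain ⟨t, ht_lt, ht⟩ := gen_surj hp hg xu
    have hut : ((u : ℕ) : ZMod (p^2)) = ((g : ZMod (p^2)))^t := by rw [ht, hxu]
    have he1 : ((u : ZMod (p^2)))^(p-1) = 1 + (l : ZMod (p^2)) * p := by
      rw [qp_spec hp u hup, hq]
    have he2 := pow_fermat hp hgmod hqg t
    rw [← hut] at he2
    have hlt : l = t % p := add_mul_p_inj hp hl (Nat.mod_lt _ hp0) (he1.symm.trans he2)
    have hmlt : t / p < p - 1 := Nat.div_lt_of_lt_mul ht_lt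
    refine ⟨t / p % f, Nat.mod_lt _ hfpos, t / p / f, ?_, ?_⟩
    · apply Nat.div_lt_of_lt_mul
      rw [Nat.mul_div_cancel' hfd]
      exact hmlt
    · have hE : l + (t / p % f) * p + (t / p / f) * f * p ^ (2-1) = t := by
        have h1 : t / p % f + t / p / f * f = t / p := Nat.mod_add_div' (t / p) f
        have h2 : t % p + t / p * p = t := Nat.mod_add_div' t p
        calc l + (t / p % f) * p + (t / p / f) * f * p ^ (2-1)
            = l + (t / p % f + t / p / f * f) * p := by norm_num; ring
          _ = l + (t / p) * p := by rw [h1]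
          _ = t := by rw [hlt]; exact h2
      rw [hE]
      have hcast : ((g ^ t % p ^ 2 : ℕ) : ZMod (p^2)) = ((u : ℕ) : ZMod (p^2)) := by
        rw [ZMod.natCast_mod]
        push_cast
        rw [← hut]
      have hv := congrArg ZMod.val hcast
      rwa [ZMod.val_cast_of_lt (Nat.mod_lt _ hsq), ZMod.val_cast_of_lt hu_lt] at hv
  · rintro ⟨i, hi, k, hk, rfl⟩
    set E := l + i * p + k * f * p ^ (2-1) with hEdef
    have hvcast : ((g ^ E % p ^ 2 : ℕ) : ZMod (p^2)) = ((g : ZMod (p^2)))^E := by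
      rw [ZMod.natCast_mod]
      push_cast
      ring
    have hv_unit : IsUnit ((g ^ E % p ^ 2 : ℕ) : ZMod (p^2)) := by
      rw [hvcast]; exact hgunit.pow E
    have hvmod : g ^ E % p ^ 2 % p ≠ 0 := unit_mod_ne hp hv_unit
    refine ⟨Nat.mod_lt _ hsq, hvmod, ?_⟩
    have hEp : E % p = l := by
      have : E = l + (i + k * f) * p := by rw [hEdef]; norm_num; ring
      rw [this, Nat.add_mul_mod_self_right, Nat.mod_eq_of_lt hl]
    have he1 : (((g ^ E % p ^ 2 : ℕ) : ZMod (p^2)))^(p-1)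
        = 1 + ((qp p (g ^ E % p ^ 2) : ℕ) : ZMod (p^2)) * p := qp_spec hp _ hvmod
    have he2 : (((g ^ E % p ^ 2 : ℕ) : ZMod (p^2)))^(p-1)
        = 1 + ((l : ℕ) : ZMod (p^2)) * p := by
      rw [hvcast, pow_fermat hp hgmod hqg E, hEp]
    exact add_mul_p_inj hp (hqlt _) hl (he1.symm.trans he2)
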